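/- For ρ > T_p and every integer p with 1 ≤ |p| ≤ M−1, the standard deviation of the normalized range-ambiguity peak is strictly less than 1/√M: std[|Λ_yy(p T_r, 0)| / |Λ_yy(0, 0)|] < 1/√M, where |Λ_yy(0,0)| = M T_p. -/

import Mathlib

open MeasureTheory ProbabilityTheory Real Finset

/-- Rectangular pulse of width `Tp`: equals `1` on `(0, Tp]` and `0` elsewhere. -/
noncomputable def pulse (Tp t : ℝ) : ℂ :=
  if 0 < t ∧ t ≤ Tp then 1 else 0

/-- Pulse train of `M` pulses with nominal PRI `Tr`, pulse width `Tp`, and jitters `ε`. -/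
noncomputable def train (M : ℕ) (Tr Tp : ℝ) (ε : ℕ → ℝ) (t : ℝ) : ℂ :=
  ∑ m ∈ Finset.range M, pulse Tp (t - m * Tr - ε m)

/-- Ambiguity function `Λ_uu(τ, f) = ∫ u(t) u*(t-τ) e^{-j2πft} dt`. -/
noncomputable def AF (u : ℝ → ℂ) (τ f : ℝ) : ℂ :=
  ∫ t : ℝ, u t * (starRingEnd ℂ) (u (t - τ)) * Complex.exp (-(2 * Real.pi * f * t) * Complex.I)

/-- `sinc x = sin x / x`, with `sinc 0 = 1`. -/
noncomputable def sinc (x : ℝ) : ℝ := if x = 0 then 1 else Real.sin x / x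

/-!
With the guard condition `ρ ≤ Tr - 2 Tp`, at delay `p Tr` pulse `m` of `y(t)` overlaps pulse `n`
of `y(t - p Tr)` only when `m = n + p`, so `|Λ_yy(p Tr, 0)| = ∑ₙ (Tp - |ε_{n+p} - ε_n|)⁺`, a sum of
at most `M` terms with values in `[0, Tp]`. Two terms are independent unless they share a jitter
index, and each term shares one with at most three terms (itself and its two neighbours in the
chain `… , n - p, n, n + p, …`). Bounding every remaining covariance by Popoviciu's `(Tp / 2)²`
gives variance at most `3 M Tp² / 4`, i.e. a normalized standard deviation at most `√3 / (2 √M)`.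
-/

def pulseAutocorr (Tp x : ℝ) : ℝ := max 0 (Tp - |x|)

lemma pulse_sub_eq_indicator (Tp A t : ℝ) :
    pulse Tp (t - A) = (Set.Ioc A (A + Tp)).indicator 1 t := by
  simp only [pulse, Set.indicator_apply, Set.mem_Ioc, Pi.one_apply, sub_pos, sub_le_iff_le_add']

lemma conj_pulse (Tp t : ℝ) : (starRingEnd ℂ) (pulse Tp t) = pulse Tp t := by
  unfold pulse; split_ifs <;> simp

lemma pulse_sub_mul_conj_pulse_sub (Tp A B t : ℝ) :
    pulse Tp (t - A) * (starRingEnd ℂ) (pulse Tp (t - B))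
      = (Set.Ioc (max A B) (min A B + Tp)).indicator 1 t := by
  rw [conj_pulse, pulse_sub_eq_indicator, pulse_sub_eq_indicator, ← Pi.mul_apply,
    ← Set.inter_indicator_one, Set.Ioc_inter_Ioc, min_add_add_right]

lemma integrable_pulse_sub_mul_conj_pulse_sub (Tp A B : ℝ) :
    Integrable (fun t => pulse Tp (t - A) * (starRingEnd ℂ) (pulse Tp (t - B))) := by
  simp_rw [pulse_sub_mul_conj_pulse_sub]
  exact (integrable_indicator_iff measurableSet_Ioc).2 (integrableOn_const measure_Ioc_lt_top.ne)

lemma integral_pulse_sub_mul_conj_pulse_sub (Tp A B : ℝ) :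
    ∫ t, pulse Tp (t - A) * (starRingEnd ℂ) (pulse Tp (t - B)) = pulseAutocorr Tp (A - B) := by
  simp_rw [pulse_sub_mul_conj_pulse_sub]
  rw [Pi.one_def, integral_indicator_const _ measurableSet_Ioc, Real.volume_real_Ioc,
    pulseAutocorr, ← max_sub_min_eq_abs, max_comm _ 0, max_comm B, min_comm B,
    Complex.real_smul, mul_one]
  ring_nf

lemma AF_train_zero (M : ℕ) (Tr Tp : ℝ) (e : ℕ → ℝ) (τ : ℝ) :
    AF (train M Tr Tp e) τ 0 = ∑ m ∈ range M, ∑ n ∈ range M,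
      (pulseAutocorr Tp (m * Tr + e m - (τ + n * Tr + e n)) : ℂ) := by
  have hprod : ∀ t, train M Tr Tp e t * (starRingEnd ℂ) (train M Tr Tp e (t - τ))
      = ∑ m ∈ range M, ∑ n ∈ range M,
          pulse Tp (t - (m * Tr + e m)) * (starRingEnd ℂ) (pulse Tp (t - (τ + n * Tr + e n))) := by
    intro t
    simp only [train, map_sum, sum_mul_sum, sub_sub, add_assoc]
  simp only [AF, Complex.ofReal_zero, mul_zero, zero_mul, neg_zero, Complex.exp_zero, mul_one,
    hprod]
  rw [integral_finsetSum _ fun m _ => integrable_finsetSum _ fun n _ =>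
    integrable_pulse_sub_mul_conj_pulse_sub Tp _ _]
  simp_rw [integral_finsetSum _ fun n _ => integrable_pulse_sub_mul_conj_pulse_sub Tp _ _,
    integral_pulse_sub_mul_conj_pulse_sub]

lemma pulseAutocorr_mem_Icc {Tp : ℝ} (hTp : 0 ≤ Tp) (x : ℝ) :
    pulseAutocorr Tp x ∈ Set.Icc 0 Tp :=
  ⟨le_max_left _ _, max_le hTp (by linarith [abs_nonneg x])⟩

lemma measurable_pulseAutocorr (Tp : ℝ) : Measurable (pulseAutocorr Tp) := by
  unfold pulseAutocorr; fun_prop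

lemma pulseAutocorr_eq_zero_of_le_abs {Tp x : ℝ} (h : Tp ≤ |x|) : pulseAutocorr Tp x = 0 :=
  max_eq_left (by linarith)

lemma pulseAutocorr_int_mul_add_eq_zero {Tr Tp d : ℝ} {k : ℤ} (hk : k ≠ 0) (hTp : 0 ≤ Tp)
    (hd : |d| ≤ Tr - 2 * Tp) : pulseAutocorr Tp (k * Tr + d) = 0 := by
  apply pulseAutocorr_eq_zero_of_le_abs
  have hk1 : (1 : ℝ) ≤ |(k : ℝ)| := by exact_mod_cast Int.one_le_abs hk
  have hTr : Tr ≤ |k * Tr| := by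
    rw [abs_mul, abs_of_nonneg (by linarith [abs_nonneg d] : 0 ≤ Tr)]
    exact le_mul_of_one_le_left (by linarith [abs_nonneg d]) hk1
  have hsub : |k * Tr| ≤ |k * Tr + d| + |d| := by simpa using abs_sub (k * Tr + d) d
  linarith

def lagPairs (M : ℕ) (p : ℤ) : Finset (ℕ × ℕ) :=
  (range M ×ˢ range M).filter fun i => (i.1 : ℤ) = i.2 + p

lemma mem_lagPairs {M : ℕ} {p : ℤ} {i : ℕ × ℕ} :
    i ∈ lagPairs M p ↔ (i.1 < M ∧ i.2 < M) ∧ (i.1 : ℤ) = i.2 + p := by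
  simp [lagPairs]

lemma AF_train_int_mul_zero (M : ℕ) (Tr Tp : ℝ) (e : ℕ → ℝ) (p : ℤ) (hTp : 0 ≤ Tp)
    (he : ∀ m < M, ∀ n < M, |e m - e n| ≤ Tr - 2 * Tp) :
    AF (train M Tr Tp e) (p * Tr) 0
      = ∑ i ∈ lagPairs M p, (pulseAutocorr Tp (e i.1 - e i.2) : ℂ) := by
  rw [AF_train_zero, lagPairs, sum_filter, sum_product]
  refine sum_congr rfl fun m hm => sum_congr rfl fun n hn => ?_
  rw [mem_range] at hm hn
  split_ifs with h
  · have h' : (m : ℝ) = n + p := by exact_mod_cast h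
    rw [h']
    ring_nf
  · rw [show (m : ℝ) * Tr + e m - (p * Tr + n * Tr + e n)
        = ((m - n - p : ℤ) : ℝ) * Tr + (e m - e n) by push_cast; ring,
      pulseAutocorr_int_mul_add_eq_zero (by omega) hTp (he m hm n hn), Complex.ofReal_zero]

lemma norm_AF_train_int_mul_zero (M : ℕ) (Tr Tp : ℝ) (e : ℕ → ℝ) (p : ℤ) (hTp : 0 ≤ Tp)
    (he : ∀ m < M, ∀ n < M, |e m - e n| ≤ Tr - 2 * Tp) :
    ‖AF (train M Tr Tp e) (p * Tr) 0‖ = ∑ i ∈ lagPairs M p, pulseAutocorr Tp (e i.1 - e i.2) := by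
  rw [AF_train_int_mul_zero M Tr Tp e p hTp he, ← Complex.ofReal_sum, Complex.norm_real,
    Real.norm_of_nonneg (sum_nonneg fun i _ => (pulseAutocorr_mem_Icc hTp _).1)]

abbrev SharesIndex (i j : ℕ × ℕ) : Prop := i.1 = j.1 ∨ i.1 = j.2 ∨ i.2 = j.1 ∨ i.2 = j.2

lemma card_lagPairs_le (M : ℕ) (p : ℤ) : #(lagPairs M p) ≤ M := by
  simpa using card_le_card_of_injOn Prod.fst (s := lagPairs M p) (t := range M)
    (fun i hi => mem_range.2 (mem_lagPairs.1 hi).1.1) fun i hi j hj h => by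
      rw [mem_coe, mem_lagPairs] at hi hj
      ext <;> omega

lemma card_filter_sharesIndex_le {M : ℕ} {p : ℤ} {i : ℕ × ℕ} (hi : i ∈ lagPairs M p) :
    #{j ∈ lagPairs M p | SharesIndex i j} ≤ 3 := by
  have hsub : {j ∈ lagPairs M p | SharesIndex i j}
      ⊆ {i} ∪ {j ∈ lagPairs M p | j.1 = i.2} ∪ {j ∈ lagPairs M p | j.2 = i.1} := by
    intro j hj
    simp only [mem_filter, mem_lagPairs] at hi hj
    simp only [mem_union, mem_singleton, mem_filter, mem_lagPairs, Prod.ext_iff]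
    omega
  have hfst : #{j ∈ lagPairs M p | j.1 = i.2} ≤ 1 := card_le_one.2 fun a ha b hb => by
    simp only [mem_filter, mem_lagPairs] at ha hb
    ext <;> omega
  have hsnd : #{j ∈ lagPairs M p | j.2 = i.1} ≤ 1 := card_le_one.2 fun a ha b hb => by
    simp only [mem_filter, mem_lagPairs] at ha hb
    ext <;> omega
  calc _ ≤ #({i} ∪ {j ∈ lagPairs M p | j.1 = i.2} ∪ {j ∈ lagPairs M p | j.2 = i.1}) :=
        card_le_card hsub
    _ ≤ #{i} + #{j ∈ lagPairs M p | j.1 = i.2} + #{j ∈ lagPairs M p | j.2 = i.1} :=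
        (card_union_le _ _).trans (Nat.add_le_add_right (card_union_le _ _) _)
    _ ≤ 3 := by rw [card_singleton]; omega

section Probability

variable {Ω : Type*} [MeasurableSpace Ω] {μ : Measure Ω}

lemma covariance_le_variance_add_variance_div_two [IsFiniteMeasure μ] {X Y : Ω → ℝ}
    (hX : MemLp X 2 μ) (hY : MemLp Y 2 μ) : cov[X, Y; μ] ≤ (Var[X; μ] + Var[Y; μ]) / 2 := by
  have hdiff := variance_nonneg (X - Y) μ
  rw [variance_sub hX hY] at hdiff
  linarith

lemma variance_sum_le_of_dependency [IsProbabilityMeasure μ] {ι : Type*} (s : Finset ι)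
    {X : ι → Ω → ℝ} {a b : ℝ} (hX : ∀ i ∈ s, ∀ᵐ ω ∂μ, X i ω ∈ Set.Icc a b)
    (hXm : ∀ i ∈ s, AEStronglyMeasurable (X i) μ) (D : ι → ι → Prop) [DecidableRel D]
    (hD : ∀ i ∈ s, ∀ j ∈ s, ¬ D i j → IndepFun (X i) (X j) μ) (k : ℕ)
    (hk : ∀ i ∈ s, #{j ∈ s | D i j} ≤ k) :
    Var[fun ω => ∑ i ∈ s, X i ω; μ] ≤ k * #s * ((b - a) / 2) ^ 2 := by
  set c := ((b - a) / 2) ^ 2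
  have hL : ∀ i ∈ s, MemLp (X i) 2 μ := fun i hi => memLp_of_bounded (hX i hi) (hXm i hi) 2
  have hV : ∀ i ∈ s, Var[X i; μ] ≤ c := fun i hi =>
    variance_le_sq_of_bounded (hX i hi) (hXm i hi).aemeasurable
  have hcov : ∀ i ∈ s, ∀ j ∈ s, cov[X i, X j; μ] ≤ if D i j then c else 0 := by
    intro i hi j hj
    split_ifs with h
    · linarith [covariance_le_variance_add_variance_div_two (hL i hi) (hL j hj), hV i hi, hV j hj]
    · exact ((hD i hi j hj h).covariance_eq_zero (hL i hi) (hL j hj)).le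
  rw [variance_fun_sum' hL]
  calc ∑ i ∈ s, ∑ j ∈ s, cov[X i, X j; μ]
      ≤ ∑ i ∈ s, ∑ j ∈ s, if D i j then c else 0 :=
        sum_le_sum fun i hi => sum_le_sum fun j hj => hcov i hi j hj
    _ = ∑ i ∈ s, (#{j ∈ s | D i j} : ℝ) * c := by
        simp only [sum_ite, sum_const, nsmul_eq_mul, mul_zero, add_zero]
    _ ≤ ∑ _i ∈ s, (k : ℝ) * c := by
        gcongr with i hi
        exact_mod_cast hk i hi
    _ = k * #s * c := by rw [sum_const, nsmul_eq_mul]; ring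

lemma ae_abs_lt_of_map_eq_smul_restrict_Ioo {X : Ω → ℝ} (hX : AEMeasurable X μ)
    {c : ENNReal} {r : ℝ} (h : μ.map X = c • volume.restrict (Set.Ioo (-r) r)) :
    ∀ᵐ ω ∂μ, |X ω| < r :=
  ae_of_ae_map hX (p := fun x => |x| < r) <| by
    rw [h]
    exact (Measure.ae_smul_measure (ae_restrict_mem measurableSet_Ioo) c).mono
      fun x hx => abs_lt.2 hx

lemma indepFun_comp_sub_of_not_sharesIndex {M : ℕ} {ε : ℕ → Ω → ℝ}
    (hindep : iIndepFun (fun m : Fin M => ε m) μ) (hmeas : ∀ m, Measurable (ε m))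
    {g : ℝ → ℝ} (hg : Measurable g) {i j : ℕ × ℕ} (hi : i.1 < M ∧ i.2 < M)
    (hj : j.1 < M ∧ j.2 < M) (hij : ¬ SharesIndex i j) :
    IndepFun (fun ω => g (ε i.1 ω - ε i.2 ω)) (fun ω => g (ε j.1 ω - ε j.2 ω)) μ := by
  have hpair := hindep.indepFun_prodMk_prodMk (fun m => hmeas m) ⟨i.1, hi.1⟩ ⟨i.2, hi.2⟩
    ⟨j.1, hj.1⟩ ⟨j.2, hj.2⟩ (Fin.ne_of_val_ne (show i.1 ≠ j.1 by omega))
    (Fin.ne_of_val_ne (show i.1 ≠ j.2 by omega)) (Fin.ne_of_val_ne (show i.2 ≠ j.1 by omega))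
    (Fin.ne_of_val_ne (show i.2 ≠ j.2 by omega))
  exact hpair.comp (hg.comp (measurable_fst.sub measurable_snd))
    (hg.comp (measurable_fst.sub measurable_snd))

lemma ae_forall_abs_lt_of_uniform {M : ℕ} {ε : ℕ → Ω → ℝ} {r : ℝ} (hr : 0 < r)
    (hε0 : ∀ ω, ε 0 ω = 0) (hmeas : ∀ m, AEMeasurable (ε m) μ) {c : ENNReal}
    (hdist : ∀ m, 1 ≤ m → m ≤ M - 1 → μ.map (ε m) = c • volume.restrict (Set.Ioo (-r) r)) :
    ∀ᵐ ω ∂μ, ∀ m < M, |ε m ω| < r := by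
  refine ae_all_iff.2 fun m => ?_
  rcases Nat.eq_zero_or_pos m with rfl | hm0
  · exact .of_forall fun ω _ => by rwa [hε0, abs_zero]
  by_cases hmM : m < M
  · exact (ae_abs_lt_of_map_eq_smul_restrict_Ioo (hmeas m) (hdist m hm0 (by omega))).mono
      fun ω h _ => h
  · exact .of_forall fun ω h => absurd h hmM

lemma variance_sum_lagPairs_le [IsProbabilityMeasure μ] {M : ℕ} {ε : ℕ → Ω → ℝ}
    (hindep : iIndepFun (fun m : Fin M => ε m) μ) (hmeas : ∀ m, Measurable (ε m))
    {Tp : ℝ} (hTp : 0 ≤ Tp) (p : ℤ) :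
    Var[fun ω => ∑ i ∈ lagPairs M p, pulseAutocorr Tp (ε i.1 ω - ε i.2 ω); μ]
      ≤ 3 * M * (Tp / 2) ^ 2 := by
  have hdep := variance_sum_le_of_dependency (μ := μ) (lagPairs M p)
    (fun i _ => .of_forall fun ω => pulseAutocorr_mem_Icc hTp _)
    (fun i _ => ((measurable_pulseAutocorr Tp).comp
      ((hmeas i.1).sub (hmeas i.2))).aestronglyMeasurable)
    SharesIndex (fun i hi j hj hij => indepFun_comp_sub_of_not_sharesIndex hindep hmeas
      (measurable_pulseAutocorr Tp) (mem_lagPairs.1 hi).1 (mem_lagPairs.1 hj).1 hij)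
    3 fun i hi => card_filter_sharesIndex_le hi
  rw [Nat.cast_ofNat, sub_zero] at hdep
  refine hdep.trans ?_
  gcongr
  exact card_lagPairs_le M p

end Probability

theorem range_sidelobe_std_lt_general
    {Ω : Type*} [MeasurableSpace Ω] (μ : Measure Ω) [IsProbabilityMeasure μ]
    (M : ℕ) (hM : 1 ≤ M) (Tr Tp ρ : ℝ) (hTp : 0 < Tp) (hρ : 0 < ρ)
    (hρTr : ρ ≤ Tr - 2 * Tp)
    (ε : ℕ → Ω → ℝ) (hε0 : ∀ ω, ε 0 ω = 0)
    (hmeas : ∀ m, Measurable (ε m))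
    (hdist : ∀ m, 1 ≤ m → m ≤ M - 1 →
      Measure.map (ε m) μ = (ENNReal.ofReal ρ)⁻¹ • volume.restrict (Set.Ioo (-(ρ / 2)) (ρ / 2)))
    (hindep : iIndepFun (fun m : Fin M => ε (m : ℕ)) μ)
    (p : ℤ) :
    Real.sqrt (variance (fun ω => ‖AF (train M Tr Tp (fun k => ε k ω)) ((p : ℝ) * Tr) 0‖ / ((M : ℝ) * Tp)) μ)
      < 1 / Real.sqrt M := by
  have hM0 : (0 : ℝ) < M := by exact_mod_cast hM
  have hpeak : (fun ω => ‖AF (train M Tr Tp (fun k => ε k ω)) ((p : ℝ) * Tr) 0‖ / ((M : ℝ) * Tp))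
      =ᵐ[μ] fun ω => ((M : ℝ) * Tp)⁻¹
        * ∑ i ∈ lagPairs M p, pulseAutocorr Tp (ε i.1 ω - ε i.2 ω) := by
    filter_upwards [ae_forall_abs_lt_of_uniform (half_pos hρ) hε0
      (fun m => (hmeas m).aemeasurable) hdist] with ω hω
    rw [norm_AF_train_int_mul_zero M Tr Tp _ p hTp.le fun m hm n hn =>
      (abs_sub _ _).trans (by linarith [hω m hm, hω n hn]), div_eq_inv_mul]
  rw [variance_congr hpeak, variance_const_mul, one_div, ← Real.sqrt_inv]
  refine Real.sqrt_lt_sqrt (mul_nonneg (sq_nonneg _) (variance_nonneg _ _)) ?_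
  calc ((M : ℝ) * Tp)⁻¹ ^ 2
        * Var[fun ω => ∑ i ∈ lagPairs M p, pulseAutocorr Tp (ε i.1 ω - ε i.2 ω); μ]
      ≤ ((M : ℝ) * Tp)⁻¹ ^ 2 * (3 * M * (Tp / 2) ^ 2) := by
        gcongr
        exact variance_sum_lagPairs_le hindep hmeas hTp.le p
    _ = 3 / 4 * (M : ℝ)⁻¹ := by field_simp; ring
    _ < (M : ℝ)⁻¹ := by linarith [inv_pos.2 hM0]

/-- For `ρ > Tp` and `1 ≤ |p| ≤ M-1`, the standard deviation of the
normalized range-ambiguity peak is strictly less than `1/√M`. -/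
theorem range_sidelobe_std_lt
    {Ω : Type*} [MeasurableSpace Ω] (μ : Measure Ω) [IsProbabilityMeasure μ]
    (M : ℕ) (hM : 1 ≤ M) (Tr Tp ρ : ℝ) (hTp : 0 < Tp) (hρ : 0 < ρ)
    (hρTr : ρ ≤ Tr - 2 * Tp)
    (ε : ℕ → Ω → ℝ) (hε0 : ∀ ω, ε 0 ω = 0)
    (hmeas : ∀ m, Measurable (ε m))
    (hdist : ∀ m, 1 ≤ m → m ≤ M - 1 →
      Measure.map (ε m) μ = (ENNReal.ofReal ρ)⁻¹ • volume.restrict (Set.Ioo (-(ρ / 2)) (ρ / 2)))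
    (hindep : iIndepFun (fun m : Fin M => ε (m : ℕ)) μ)
    (hTpρ : Tp < ρ)
    (p : ℤ) (hp1 : 1 ≤ |p|) (hp2 : |p| ≤ (M : ℤ) - 1) :
    Real.sqrt (variance (fun ω => ‖AF (train M Tr Tp (fun k => ε k ω)) ((p : ℝ) * Tr) 0‖ / ((M : ℝ) * Tp)) μ)
      < 1 / Real.sqrt M :=
  range_sidelobe_std_lt_general μ M hM Tr Tp ρ hTp hρ hρTr ε hε0 hmeas hdist hindep p
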